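/- Fix k > 0, δ > 0, N ∈ ℕ, complex coefficients b₀, …, b_N and R_N ≥ 0. Let b : [−δ, δ] → ℂ be measurable with |b(t) − Σ_{j=0}^N b_j t^{2j}| ≤ R_N |t|^{2N+2} for all |t| ≤ δ. Then there exists a constant C > 0, depending only on k, δ, N, R_N and |b₀|, …, |b_N|, such that for every z ∈ ℂ with Re z ≥ 0, Im z ≥ 0 and |z| ≥ 1: |∫_{−δ}^{δ} e^{−k t² z e^{−iπ/4}} b(t) dt − Σ_{j=0}^N b_j Γ(j+1/2) (k z e^{−iπ/4})^{−(j+1/2)}| ≤ C |z|^{−(N + 3/2)}. -/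

import Mathlib

/-!
Put `w = k z e^{-iπ/4}`; in the closed first quadrant `Re w ≥ (k/√2)|z|`. Integrating by parts
from the complex Gaussian integral gives the moments
`∫_ℝ t^{2j} e^{-wt²} dt = Γ(j+1/2) w^{-(j+1/2)}`, so the error is `∫_ℝ e^{-wt²} g(t) dt` with
`g = 1_{[-δ,δ]} b - Σ_j b_j t^{2j}`. Off `[-δ,δ]` each `|t|^{2j}` is at most
`δ^{2j-2N-2} |t|^{2N+2}`, hence `|g(t)| ≤ R' |t|^{2N+2}` on all of `ℝ`, and
`∫_ℝ |t|^{2N+2} e^{-(Re w) t²} dt = Γ(N+3/2) (Re w)^{-(N+3/2)}`.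
-/

open MeasureTheory Set Real

lemma integrable_abs_pow_mul_exp_neg_mul_sq {b : ℝ} (hb : 0 < b) (n : ℕ) :
    Integrable fun t : ℝ => |t| ^ n * rexp (-b * t ^ 2) := by
  simpa [abs_mul, abs_pow, Real.rpow_natCast] using
    (integrable_rpow_mul_exp_neg_mul_sq hb (s := n) (neg_one_lt_zero.trans_le n.cast_nonneg)).abs

lemma integral_abs_pow_mul_exp_neg_mul_sq {b : ℝ} (hb : 0 < b) (n : ℕ) :
    ∫ t : ℝ, |t| ^ n * rexp (-b * t ^ 2)
      = Real.Gamma ((n + 1) / 2) * b ^ (-((n : ℝ) + 1) / 2) := by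
  have h := integral_comp_abs (f := fun t : ℝ => t ^ (n : ℝ) * rexp (-b * t ^ (2 : ℝ)))
  rw [integral_rpow_mul_exp_neg_mul_rpow two_pos (neg_one_lt_zero.trans_le n.cast_nonneg) hb] at h
  simp only [Real.rpow_natCast, Real.rpow_two, sq_abs] at h
  rw [h]
  ring

lemma norm_ofReal_pow_mul_cexp_neg_mul_sq (w : ℂ) (n : ℕ) (t : ℝ) :
    ‖(t : ℂ) ^ n * Complex.exp (-w * (t : ℂ) ^ 2)‖ = |t| ^ n * rexp (-w.re * t ^ 2) := by
  rw [norm_mul, norm_pow, Complex.norm_real, Real.norm_eq_abs, norm_cexp_neg_mul_sq]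

lemma integrable_ofReal_pow_mul_cexp_neg_mul_sq {w : ℂ} (hw : 0 < w.re) (n : ℕ) :
    Integrable fun t : ℝ => (t : ℂ) ^ n * Complex.exp (-w * (t : ℂ) ^ 2) := by
  refine ⟨by fun_prop, ?_⟩
  rw [← hasFiniteIntegral_norm_iff]
  simp_rw [norm_ofReal_pow_mul_cexp_neg_mul_sq]
  exact (integrable_abs_pow_mul_exp_neg_mul_sq hw n).2

lemma hasDerivAt_ofReal_pow_mul_cexp_neg_mul_sq (w : ℂ) (n : ℕ) (t : ℝ) :
    HasDerivAt (fun t : ℝ => (t : ℂ) ^ (n + 1) * Complex.exp (-w * (t : ℂ) ^ 2))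
      ((n + 1) * ((t : ℂ) ^ n * Complex.exp (-w * (t : ℂ) ^ 2))
        - 2 * w * ((t : ℂ) ^ (n + 2) * Complex.exp (-w * (t : ℂ) ^ 2))) t := by
  have hpow := (hasDerivAt_pow (n + 1) (t : ℂ)).comp_ofReal
  have hexp := (((hasDerivAt_pow 2 (t : ℂ)).const_mul (-w)).cexp).comp_ofReal
  refine (hpow.fun_mul hexp).congr_deriv ?_
  simp only [Nat.add_sub_cancel]
  push_cast
  ring

lemma integral_ofReal_pow_add_two_mul_cexp_neg_mul_sq {w : ℂ} (hw : 0 < w.re) (n : ℕ) :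
    2 * w * ∫ t : ℝ, (t : ℂ) ^ (n + 2) * Complex.exp (-w * (t : ℂ) ^ 2)
      = (n + 1) * ∫ t : ℝ, (t : ℂ) ^ n * Complex.exp (-w * (t : ℂ) ^ 2) := by
  have hint := integrable_ofReal_pow_mul_cexp_neg_mul_sq hw
  have h := integral_eq_zero_of_hasDerivAt_of_integrable
    (hasDerivAt_ofReal_pow_mul_cexp_neg_mul_sq w n)
    (((hint n).const_mul _).sub ((hint (n + 2)).const_mul _)) (hint (n + 1))
  rw [integral_sub ((hint n).const_mul _) ((hint (n + 2)).const_mul _), integral_const_mul,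
    integral_const_mul, sub_eq_zero] at h
  exact h.symm

lemma integral_cexp_neg_mul_sq_eq_Gamma {w : ℂ} (hw : 0 < w.re) :
    ∫ t : ℝ, Complex.exp (-w * (t : ℂ) ^ 2) = Complex.Gamma (1 / 2) * w ^ (-(1 / 2) : ℂ) := by
  have hw0 : w ≠ 0 := by rintro rfl; simp at hw
  have harg : w.arg ≠ π := fun h => by linarith [(Complex.arg_eq_pi_iff.mp h).1]
  rw [integral_gaussian_complex hw, Complex.Gamma_one_half_eq, div_eq_mul_inv,
    Complex.cpow_def_of_ne_zero
      (mul_ne_zero (Complex.ofReal_ne_zero.mpr pi_ne_zero) (inv_ne_zero hw0)),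
    Complex.cpow_def_of_ne_zero (Complex.ofReal_ne_zero.mpr pi_ne_zero),
    Complex.cpow_def_of_ne_zero hw0, Complex.log_ofReal_mul pi_pos (inv_ne_zero hw0),
    Complex.log_inv _ harg, Complex.ofReal_log pi_pos.le, ← Complex.exp_add]
  congr 1
  ring

lemma integral_ofReal_pow_two_mul_mul_cexp_neg_mul_sq {w : ℂ} (hw : 0 < w.re) (j : ℕ) :
    ∫ t : ℝ, (t : ℂ) ^ (2 * j) * Complex.exp (-w * (t : ℂ) ^ 2)
      = Complex.Gamma (j + 1 / 2) * w ^ (-((j : ℂ) + 1 / 2)) := by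
  have hw0 : w ≠ 0 := by rintro rfl; simp at hw
  induction j with
  | zero => simpa using integral_cexp_neg_mul_sq_eq_Gamma hw
  | succ j ih =>
    have hj : (j : ℂ) + 1 / 2 ≠ 0 := Complex.ne_zero_of_re_pos (by norm_num; positivity)
    have hrec := integral_ofReal_pow_add_two_mul_cexp_neg_mul_sq hw (2 * j)
    rw [ih] at hrec
    apply mul_left_cancel₀ (mul_ne_zero two_ne_zero hw0)
    rw [show 2 * (j + 1) = 2 * j + 2 by ring, hrec,
      show ((j + 1 : ℕ) : ℂ) + 1 / 2 = (j + 1 / 2) + 1 by push_cast; ring,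
      Complex.Gamma_add_one _ hj, neg_add' (_ + _), Complex.cpow_sub _ _ hw0, Complex.cpow_one]
    field_simp
    push_cast
    ring

section GaussianWeight

variable {w : ℂ} {g : ℝ → ℂ} {C : ℝ} {n : ℕ}

lemma norm_cexp_neg_mul_sq_mul_le (hgC : ∀ t, ‖g t‖ ≤ C * |t| ^ n) (t : ℝ) :
    ‖Complex.exp (-w * (t : ℂ) ^ 2) * g t‖ ≤ C * (|t| ^ n * rexp (-w.re * t ^ 2)) := by
  rw [norm_mul, norm_cexp_neg_mul_sq]
  nlinarith [hgC t, (Real.exp_pos (-w.re * t ^ 2)).le]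

lemma integrable_cexp_neg_mul_sq_mul (hw : 0 < w.re) (hg : AEStronglyMeasurable g)
    (hgC : ∀ t, ‖g t‖ ≤ C * |t| ^ n) :
    Integrable fun t : ℝ => Complex.exp (-w * (t : ℂ) ^ 2) * g t :=
  ((integrable_abs_pow_mul_exp_neg_mul_sq hw n).const_mul C).mono'
    ((by fun_prop : Continuous fun t : ℝ => Complex.exp (-w * (t : ℂ) ^ 2)).aestronglyMeasurable.mul
      hg)
    (.of_forall (norm_cexp_neg_mul_sq_mul_le hgC))

lemma norm_integral_cexp_neg_mul_sq_mul_le (hw : 0 < w.re) (hgC : ∀ t, ‖g t‖ ≤ C * |t| ^ n) :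
    ‖∫ t : ℝ, Complex.exp (-w * (t : ℂ) ^ 2) * g t‖
      ≤ C * Real.Gamma ((n + 1) / 2) * w.re ^ (-((n : ℝ) + 1) / 2) := by
  refine (norm_integral_le_of_norm_le ((integrable_abs_pow_mul_exp_neg_mul_sq hw n).const_mul C)
    (.of_forall (norm_cexp_neg_mul_sq_mul_le hgC))).trans_eq ?_
  rw [integral_const_mul, integral_abs_pow_mul_exp_neg_mul_sq hw, mul_assoc]

end GaussianWeight

section EvenSums

variable {w : ℂ} (s : Finset ℕ) (c : ℕ → ℂ)

lemma integrable_cexp_neg_mul_sq_mul_sum (hw : 0 < w.re) :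
    Integrable fun t : ℝ =>
      Complex.exp (-w * (t : ℂ) ^ 2) * ∑ j ∈ s, c j * (t : ℂ) ^ (2 * j) := by
  simp_rw [Finset.mul_sum, mul_left_comm _ (c _), mul_comm (Complex.exp _)]
  exact integrable_finsetSum _ fun j _ =>
    (integrable_ofReal_pow_mul_cexp_neg_mul_sq hw (2 * j)).const_mul (c j)

lemma integral_cexp_neg_mul_sq_mul_sum (hw : 0 < w.re) :
    ∫ t : ℝ, Complex.exp (-w * (t : ℂ) ^ 2) * ∑ j ∈ s, c j * (t : ℂ) ^ (2 * j)
      = ∑ j ∈ s, c j * Complex.Gamma (j + 1 / 2) * w ^ (-((j : ℂ) + 1 / 2)) := by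
  simp_rw [Finset.mul_sum, mul_left_comm _ (c _), mul_comm (Complex.exp _)]
  rw [integral_finsetSum _ fun j _ =>
    (integrable_ofReal_pow_mul_cexp_neg_mul_sq hw (2 * j)).const_mul (c j)]
  simp_rw [integral_const_mul, integral_ofReal_pow_two_mul_mul_cexp_neg_mul_sq hw, mul_assoc]

end EvenSums

lemma abs_pow_le_div_mul_abs_pow {δ t : ℝ} (hδ : 0 < δ) (ht : δ ≤ |t|) {j n : ℕ} (hjn : j ≤ n) :
    |t| ^ j ≤ δ ^ j / δ ^ n * |t| ^ n := by
  obtain ⟨d, rfl⟩ := Nat.exists_eq_add_of_le hjn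
  rw [div_mul_eq_mul_div, le_div_iff₀ (by positivity), pow_add, pow_add]
  calc |t| ^ j * (δ ^ j * δ ^ d) = δ ^ j * |t| ^ j * δ ^ d := by ring
    _ ≤ δ ^ j * |t| ^ j * |t| ^ d := by gcongr
    _ = δ ^ j * (|t| ^ j * |t| ^ d) := by ring

section Truncation

variable {δ R : ℝ} {b : ℝ → ℂ} {bc : ℕ → ℂ} {N : ℕ}

lemma norm_indicator_sub_sum_le (hδ : 0 < δ) (hR : 0 ≤ R)
    (hbP : ∀ t : ℝ, |t| ≤ δ →
      ‖b t - ∑ j ∈ Finset.range (N + 1), bc j * (t : ℂ) ^ (2 * j)‖ ≤ R * |t| ^ (2 * N + 2))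
    (t : ℝ) :
    ‖(Icc (-δ) δ).indicator b t - ∑ j ∈ Finset.range (N + 1), bc j * (t : ℂ) ^ (2 * j)‖
      ≤ (R + ∑ j ∈ Finset.range (N + 1), ‖bc j‖ * (δ ^ (2 * j) / δ ^ (2 * N + 2)))
        * |t| ^ (2 * N + 2) := by
  have hD : 0 ≤ ∑ j ∈ Finset.range (N + 1), ‖bc j‖ * (δ ^ (2 * j) / δ ^ (2 * N + 2)) := by
    positivity
  by_cases ht : |t| ≤ δ
  · rw [indicator_of_mem (s := Icc (-δ) δ) (abs_le.mp ht)]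
    exact (hbP t ht).trans (by gcongr; linarith)
  · rw [indicator_of_notMem (fun h : t ∈ Icc (-δ) δ => ht (abs_le.mpr h)), zero_sub, norm_neg]
    calc ‖∑ j ∈ Finset.range (N + 1), bc j * (t : ℂ) ^ (2 * j)‖
        ≤ ∑ j ∈ Finset.range (N + 1), ‖bc j‖ * |t| ^ (2 * j) := by
          refine (norm_sum_le _ _).trans_eq (Finset.sum_congr rfl fun j _ => ?_)
          rw [norm_mul, norm_pow, Complex.norm_real, Real.norm_eq_abs]
      _ ≤ ∑ j ∈ Finset.range (N + 1),
            ‖bc j‖ * (δ ^ (2 * j) / δ ^ (2 * N + 2) * |t| ^ (2 * N + 2)) := by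
          gcongr with j hj
          exact abs_pow_le_div_mul_abs_pow hδ (not_le.mp ht).le
            (by linarith [Finset.mem_range.mp hj])
      _ ≤ _ := by
          simp_rw [← mul_assoc, ← Finset.sum_mul]
          gcongr
          linarith

lemma norm_setIntegral_sub_sum_Gamma_le {w : ℂ} (hw : 0 < w.re) (hδ : 0 < δ) (hR : 0 ≤ R)
    (hb : Measurable b)
    (hbP : ∀ t : ℝ, |t| ≤ δ →
      ‖b t - ∑ j ∈ Finset.range (N + 1), bc j * (t : ℂ) ^ (2 * j)‖ ≤ R * |t| ^ (2 * N + 2)) :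
    ‖(∫ t in Icc (-δ) δ, Complex.exp (-w * (t : ℂ) ^ 2) * b t)
        - ∑ j ∈ Finset.range (N + 1), bc j * Complex.Gamma (j + 1 / 2) * w ^ (-((j : ℂ) + 1 / 2))‖
      ≤ (R + ∑ j ∈ Finset.range (N + 1), ‖bc j‖ * (δ ^ (2 * j) / δ ^ (2 * N + 2)))
        * Real.Gamma (N + 3 / 2) * w.re ^ (-((N : ℝ) + 3 / 2)) := by
  set P : ℝ → ℂ := fun t => ∑ j ∈ Finset.range (N + 1), bc j * (t : ℂ) ^ (2 * j)
  have hg := norm_indicator_sub_sum_le hδ hR hbP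
  have hg_meas : AEStronglyMeasurable fun t => (Icc (-δ) δ).indicator b t - P t :=
    ((hb.indicator measurableSet_Icc).sub (by fun_prop)).aestronglyMeasurable
  have heg := integrable_cexp_neg_mul_sq_mul hw hg_meas hg
  have heP := integrable_cexp_neg_mul_sq_mul_sum (Finset.range (N + 1)) bc hw
  have hsplit : (∫ t in Icc (-δ) δ, Complex.exp (-w * (t : ℂ) ^ 2) * b t)
      - ∑ j ∈ Finset.range (N + 1), bc j * Complex.Gamma (j + 1 / 2) * w ^ (-((j : ℂ) + 1 / 2))
      = ∫ t : ℝ, Complex.exp (-w * (t : ℂ) ^ 2) * ((Icc (-δ) δ).indicator b t - P t) := by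
    have heb : Integrable fun t : ℝ =>
        Complex.exp (-w * (t : ℂ) ^ 2) * (Icc (-δ) δ).indicator b t :=
      (heg.add heP).congr (.of_forall fun t => by simp only [Pi.add_apply]; ring)
    simp_rw [mul_sub]
    rw [integral_sub heb heP, integral_cexp_neg_mul_sq_mul_sum _ _ hw,
      ← integral_indicator measurableSet_Icc]
    simp_rw [indicator_mul_right]
  rw [hsplit]
  refine (norm_integral_cexp_neg_mul_sq_mul_le hw hg).trans_eq ?_
  congr 3 <;> push_cast <;> ring

end Truncation

lemma sqrt_two_div_two_mul_norm_le_re_mul_exp {z : ℂ} (hre : 0 ≤ z.re) (him : 0 ≤ z.im) :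
    √2 / 2 * ‖z‖ ≤ (z * Complex.exp (-(π / 4) * Complex.I)).re := by
  have harg : -(π / 4 : ℂ) * Complex.I = ((-(π / 4) : ℝ) : ℂ) * Complex.I := by push_cast; ring
  have hre' : (Complex.exp (-(π / 4) * Complex.I)).re = √2 / 2 := by
    rw [harg, Complex.exp_ofReal_mul_I_re, Real.cos_neg, Real.cos_pi_div_four]
  have him' : (Complex.exp (-(π / 4) * Complex.I)).im = -(√2 / 2) := by
    rw [harg, Complex.exp_ofReal_mul_I_im, Real.sin_neg, Real.sin_pi_div_four]
  have hnorm : ‖z‖ ≤ z.re + z.im := by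
    rw [Complex.norm_def, Complex.normSq_apply]
    exact Real.sqrt_le_iff.mpr ⟨by positivity, by nlinarith⟩
  rw [Complex.mul_re, hre', him']
  nlinarith [Real.sqrt_nonneg 2]

theorem statement_14 (k δ : ℝ) (hk : 0 < k) (hδ : 0 < δ) (N : ℕ)
    (bc : ℕ → ℂ) (R : ℝ) (hR : 0 ≤ R) :
    ∃ C > 0, ∀ b : ℝ → ℂ, Measurable b →
      (∀ t : ℝ, |t| ≤ δ →
        ‖(b t - ∑ j ∈ Finset.range (N + 1), bc j * (t : ℂ) ^ (2 * j))‖ ≤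
          R * |t| ^ (2 * N + 2)) →
      ∀ z : ℂ, 0 ≤ z.re → 0 ≤ z.im → 1 ≤ ‖z‖ →
        ‖((∫ t in Set.Icc (-δ) δ,
            Complex.exp (-k * t ^ 2 * z * Complex.exp (-(π / 4) * Complex.I)) * b t) -
          ∑ j ∈ Finset.range (N + 1), bc j * Complex.Gamma ((j : ℂ) + 1 / 2) *
            ((k : ℂ) * z * Complex.exp (-(π / 4) * Complex.I)) ^ (-((j : ℂ) + 1 / 2)))‖ ≤
          C * ‖z‖ ^ (-((N : ℝ) + 3 / 2)) := by
  set D := ∑ j ∈ Finset.range (N + 1), ‖bc j‖ * (δ ^ (2 * j) / δ ^ (2 * N + 2))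
  set m := k * (√2 / 2)
  have hm : 0 < m := by positivity
  refine ⟨(R + D + 1) * Real.Gamma (N + 3 / 2) * m ^ (-((N : ℝ) + 3 / 2)), by positivity, ?_⟩
  intro b hb hbP z hre him hz
  set w := (k : ℂ) * z * Complex.exp (-(π / 4) * Complex.I)
  have hmw : m * ‖z‖ ≤ w.re := by
    rw [show w = k * (z * Complex.exp (-(π / 4) * Complex.I)) from mul_assoc _ _ _,
      Complex.re_ofReal_mul, mul_assoc]
    exact mul_le_mul_of_nonneg_left (sqrt_two_div_two_mul_norm_le_re_mul_exp hre him) hk.le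
  have hmz : 0 < m * ‖z‖ := mul_pos hm (zero_lt_one.trans_le hz)
  have hexponent (t : ℝ) : -(k : ℂ) * (t : ℂ) ^ 2 * z * Complex.exp (-(π / 4) * Complex.I)
      = -w * (t : ℂ) ^ 2 := by ring
  simp_rw [hexponent]
  calc _ ≤ (R + D) * Real.Gamma (N + 3 / 2) * w.re ^ (-((N : ℝ) + 3 / 2)) :=
        norm_setIntegral_sub_sum_Gamma_le (hmz.trans_le hmw) hδ hR hb hbP
    _ ≤ (R + D + 1) * Real.Gamma (N + 3 / 2) * (m * ‖z‖) ^ (-((N : ℝ) + 3 / 2)) := by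
        refine mul_le_mul (mul_le_mul_of_nonneg_right (by linarith)
          (Real.Gamma_pos_of_pos (by positivity)).le) ?_
          (Real.rpow_nonneg (hmz.trans_le hmw).le _) (by positivity)
        exact Real.rpow_le_rpow_of_nonpos hmz hmw (by linarith [N.cast_nonneg (α := ℝ)])
    _ = _ := by rw [Real.mul_rpow hm.le (norm_nonneg z)]; ring
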